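/- arXiv:1310.4063 — 2 statements merged into one kernel-verified Lean document; each statement's English description precedes it below -/
import Mathlib

section
/- Let A and B be central simple algebras over a field k. If there exist a finitely generated projective A^op ⊗ B-module M and a finitely generated projective B^op ⊗ A-module N such that M ⊗_B N ≅ A as A-bimodules and N ⊗_A M ≅ B as B-bimodules, then [A] = [B] in the Brauer group Br(k). -/
open TensorProduct MulOpposite

section

variable (k : Type) [Field k] (A B : Type) [Ring A] [Ring B] [Algebra k A] [Algebra k B]

variable (M N : Type) [AddCommGroup M] [AddCommGroup N]
  [Module (A ⊗[k] Bᵐᵒᵖ) M] [Module k M] [IsScalarTower k (A ⊗[k] Bᵐᵒᵖ) M]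
  [Module (B ⊗[k] Aᵐᵒᵖ) N] [Module k N] [IsScalarTower k (B ⊗[k] Aᵐᵒᵖ) N]

/-- The subspace of `M ⊗[k] N` spanned by the relations `(m·b) ⊗ n - m ⊗ (b·n)` defining the
balanced tensor product `M ⊗_B N` of an `(A,B)`-bimodule `M` (a module over `A ⊗ Bᵐᵒᵖ`) and a
`(B,A)`-bimodule `N` (a module over `B ⊗ Aᵐᵒᵖ`). -/
def balancedRel : Submodule k (M ⊗[k] N) :=
  Submodule.span k
    {x : M ⊗[k] N | ∃ (b : B) (m : M) (n : N),
      x = ((((1 : A) ⊗ₜ[k] op b) : A ⊗[k] Bᵐᵒᵖ) • m) ⊗ₜ[k] n -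
          m ⊗ₜ[k] ((((b ⊗ₜ[k] (1 : Aᵐᵒᵖ)) : B ⊗[k] Aᵐᵒᵖ)) • n)}

/-- The balanced tensor product `M ⊗_B N` over `B`. -/
def balancedTensor : Type := (M ⊗[k] N) ⧸ balancedRel k A B M N

noncomputable instance : AddCommGroup (balancedTensor k A B M N) :=
  inferInstanceAs (AddCommGroup ((M ⊗[k] N) ⧸ balancedRel k A B M N))

noncomputable instance : Module k (balancedTensor k A B M N) :=
  inferInstanceAs (Module k ((M ⊗[k] N) ⧸ balancedRel k A B M N))

/-- The class of `m ⊗ n` in the balanced tensor product `M ⊗_B N`. -/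
noncomputable def balancedTensor.mk (m : M) (n : N) : balancedTensor k A B M N :=
  Submodule.Quotient.mk (m ⊗ₜ[k] n)

/-- `M ⊗_B N` is isomorphic to `A` as an `A`-bimodule: a `k`-linear isomorphism to `A`
equivariant for the left and right `A`-actions. -/
def IsBimoduleIsoToA : Prop :=
  ∃ e : balancedTensor k A B M N ≃ₗ[k] A,
    (∀ (a : A) (m : M) (n : N),
      e (balancedTensor.mk k A B M N ((((a ⊗ₜ[k] (1 : Bᵐᵒᵖ)) : A ⊗[k] Bᵐᵒᵖ)) • m) n) =
        a * e (balancedTensor.mk k A B M N m n)) ∧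
    (∀ (a : A) (m : M) (n : N),
      e (balancedTensor.mk k A B M N m ((((1 : B) ⊗ₜ[k] op a) : B ⊗[k] Aᵐᵒᵖ) • n)) =
        e (balancedTensor.mk k A B M N m n) * a)

end

/-!
Over the simple algebra `B` every finite module is a sum of copies of one simple module `S`, and
`X ⊗_B B ≅ X`; counting copies of `S` gives `dim (X ⊗_B Y) · dim B = dim X · dim Y`. Hence
`M ⊗_B N ≅ A` yields `dim A · dim B = dim M · dim N`. Since `A ⊗ Bᵒᵖ` and `B ⊗ Aᵒᵖ` are simple, they
act faithfully on `M` and `N`, so `dim A · dim B` is at most both `(dim M)²` and `(dim N)²`. Thus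
`dim M = dim N` and `A ⊗ Bᵒᵖ ≅ End_k M` is a matrix algebra, as is `B ⊗ Bᵒᵖ ≅ End_k B`, and
`M_{dim M}(B) ≅ B ⊗ A ⊗ Bᵒᵖ ≅ A ⊗ B ⊗ Bᵒᵖ ≅ M_{dim B}(A)`.
-/

open Module

theorem IsSimpleRing.isIsotypicOfType {R : Type*} [Ring R] [IsSimpleRing R] [IsArtinianRing R]
    (S : Submodule R R) [IsSimpleModule R S] (M : Type*) [AddCommGroup M] [Module R M] :
    IsIsotypicOfType R M S := fun m _ =>
  have ⟨I, ⟨e⟩⟩ := IsSemisimpleRing.exists_linearEquiv_ideal_of_isSimpleModule R m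
  have : IsSimpleModule R I := .congr e.symm
  ⟨e.trans (IsSimpleRing.isIsotypic R R S I).some⟩

section

variable (k : Type*) [CommRing k] (B : Type*) [Ring B]
  (X : Type*) [AddCommGroup X] [Module k X] [Module Bᵐᵒᵖ X]
  (Y : Type*) [AddCommGroup Y] [Module k Y] [Module B Y]

def BalancedTensorProduct.rel : Submodule k (X ⊗[k] Y) :=
  Submodule.span k {z | ∃ (b : B) (x : X) (y : Y), z = (op b • x) ⊗ₜ y - x ⊗ₜ (b • y)}

def BalancedTensorProduct : Type _ := (X ⊗[k] Y) ⧸ BalancedTensorProduct.rel k B X Y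

end

namespace BalancedTensorProduct

section General

variable (k : Type*) [CommRing k] (B : Type*) [Ring B]
  {X : Type*} [AddCommGroup X] [Module k X] [Module Bᵐᵒᵖ X]
  {Y : Type*} [AddCommGroup Y] [Module k Y] [Module B Y]

noncomputable instance : AddCommGroup (BalancedTensorProduct k B X Y) :=
  inferInstanceAs (AddCommGroup ((X ⊗[k] Y) ⧸ rel k B X Y))

noncomputable instance : Module k (BalancedTensorProduct k B X Y) :=
  inferInstanceAs (Module k ((X ⊗[k] Y) ⧸ rel k B X Y))

noncomputable def mk : X →ₗ[k] Y →ₗ[k] BalancedTensorProduct k B X Y :=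
  (TensorProduct.mk k X Y).compr₂ (rel k B X Y).mkQ

theorem mk_op_smul (b : B) (x : X) (y : Y) : mk k B (op b • x) y = mk k B x (b • y) :=
  (Submodule.Quotient.eq _).mpr <| Submodule.subset_span ⟨b, x, y, rfl⟩

variable {k B} {W : Type*} [AddCommGroup W] [Module k W]

noncomputable def lift (φ : X →ₗ[k] Y →ₗ[k] W)
    (hφ : ∀ (b : B) (x : X) (y : Y), φ (op b • x) y = φ x (b • y)) :
    BalancedTensorProduct k B X Y →ₗ[k] W :=
  (rel k B X Y).liftQ (TensorProduct.lift φ) <| (Submodule.span_le).mpr <| by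
    rintro _ ⟨b, x, y, rfl⟩
    simp [hφ]

@[simp] theorem lift_mk (φ : X →ₗ[k] Y →ₗ[k] W) (hφ) (x : X) (y : Y) :
    lift φ hφ (mk k B x y) = φ x y :=
  TensorProduct.lift.tmul x y

@[ext] theorem hom_ext {f g : BalancedTensorProduct k B X Y →ₗ[k] W}
    (h : ∀ x y, f (mk k B x y) = g (mk k B x y)) : f = g :=
  Submodule.linearMap_qext _ (TensorProduct.ext' h)

variable [Algebra k B] [IsScalarTower k B Y] {Z : Type*} [AddCommGroup Z] [Module k Z] [Module B Z]
  [IsScalarTower k B Z]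

noncomputable def mapRight (g : Y →ₗ[B] Z) :
    BalancedTensorProduct k B X Y →ₗ[k] BalancedTensorProduct k B X Z :=
  lift ((mk k B).compl₂ (g.restrictScalars k)) fun b x y => by
    simp [mk_op_smul]

@[simp] theorem mapRight_mk (g : Y →ₗ[B] Z) (x : X) (y : Y) :
    mapRight g (mk k B x y) = mk k B x (g y) :=
  lift_mk ..

noncomputable def congrRight (e : Y ≃ₗ[B] Z) :
    BalancedTensorProduct k B X Y ≃ₗ[k] BalancedTensorProduct k B X Z :=
  .ofLinearMap (mapRight e.toLinearMap) (mapRight e.symm.toLinearMap) (by ext; simp) (by ext; simp)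

variable (ι : Type*) [Fintype ι] [DecidableEq ι]

noncomputable def piRight :
    BalancedTensorProduct k B X (ι → Y) ≃ₗ[k] (ι → BalancedTensorProduct k B X Y) :=
  .ofLinearMap (LinearMap.pi fun i => mapRight (LinearMap.proj i))
    (LinearMap.lsum k (fun _ => BalancedTensorProduct k B X Y) k
      fun i => mapRight (LinearMap.single B (fun _ => Y) i))
    (by
      refine LinearMap.pi_ext' fun i => ?_
      ext x y j
      rcases eq_or_ne j i with rfl | hji
      · simp [-LinearMap.lsum_apply, LinearMap.lsum_piSingle]
      · simp [-LinearMap.lsum_apply, LinearMap.lsum_piSingle, hji])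
    (by
      ext x f
      simp [← map_sum, Finset.univ_sum_single])

variable (X) [IsScalarTower k Bᵐᵒᵖ X]

noncomputable def rid : BalancedTensorProduct k B X B ≃ₗ[k] X :=
  .ofLinearMap
    (lift (LinearMap.mk₂ k (fun x b => op b • x) (fun _ _ _ => smul_add ..)
      (fun c x b => smul_comm _ c x) (fun x b b' => by simp [op_add, add_smul])
      (fun c x b => by simp [op_smul, smul_assoc])) fun b x y => by
      show _ = op (b * y) • x
      rw [op_mul, mul_smul]; rfl)
    ((mk k B).flip 1) (by ext; simp) (by ext x b; simp [mk_op_smul])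

end General

section Finrank

variable {k : Type*} [Field k] {B : Type*} [Ring B] [Algebra k B]
  (X : Type*) [AddCommGroup X] [Module k X] [Module Bᵐᵒᵖ X] [IsScalarTower k Bᵐᵒᵖ X]
  (Y : Type*) [AddCommGroup Y] [Module k Y] [Module B Y] [IsScalarTower k B Y]

theorem finrank_mul_finrank [IsSimpleRing B] [FiniteDimensional k B] [FiniteDimensional k X]
    [FiniteDimensional k Y] :
    finrank k (BalancedTensorProduct k B X Y) * finrank k B = finrank k X * finrank k Y := by
  have : IsArtinianRing B := .of_finite k B
  obtain ⟨S, hS⟩ := IsAtomic.exists_atom (Submodule B B)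
  have : IsSimpleModule B S := isSimpleModule_iff_isAtom.mpr hS
  have : Module.Finite B Y := .of_restrictScalars_finite k B Y
  obtain ⟨j, ⟨eY⟩⟩ := (IsSimpleRing.isIsotypicOfType S Y).linearEquiv_fun
  obtain ⟨m, ⟨eB⟩⟩ := (IsSimpleRing.isIsotypicOfType S B).linearEquiv_fun
  have : FiniteDimensional k (BalancedTensorProduct k B X S) :=
    inferInstanceAs (FiniteDimensional k (_ ⧸ rel k B X S))
  have hT := ((congrRight (k := k) (X := X) eY).trans (piRight (Fin j))).finrank_eq
  have hX := ((rid X).symm.trans ((congrRight (k := k) eB).trans (piRight (Fin m)))).finrank_eq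
  have hY := (eY.restrictScalars k).finrank_eq
  have hB := (eB.restrictScalars k).finrank_eq
  simp only [finrank_pi_fintype, Finset.sum_const, Finset.card_univ, Fintype.card_fin,
    smul_eq_mul] at hT hX hY hB
  rw [hT, hX, hY, hB]
  ring

end Finrank

end BalancedTensorProduct

namespace Algebra.TensorProduct

variable {k A B ι : Type*} [CommRing k] [Ring A] [Ring B] [Algebra k A] [Algebra k B]
  (b : Basis ι k B)

@[simp] theorem basis_repr_tmul_one_mul (c : A) (x : A ⊗[k] B) (i : ι) :
    (basis A b).repr ((c ⊗ₜ 1) * x) i = c * (basis A b).repr x i := by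
  induction x using TensorProduct.induction_on with
  | zero => simp
  | tmul a m => simp [mul_assoc]
  | add x y hx hy => simp [mul_add, hx, hy]

@[simp] theorem basis_repr_mul_tmul_one (x : A ⊗[k] B) (d : A) (i : ι) :
    (basis A b).repr (x * (d ⊗ₜ 1)) i = (basis A b).repr x i * d := by
  induction x using TensorProduct.induction_on with
  | zero => simp
  | tmul a m => simp [mul_assoc, Algebra.commutes]
  | add x y hx hy => simp [add_mul, hx, hy]

theorem mem_range_includeRight_of_repr_mem_center [Algebra.IsCentral k A] (y : A ⊗[k] B)
    (hy : ∀ i, (basis A b).repr y i ∈ Subalgebra.center k A) :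
    y ∈ (includeRight : B →ₐ[k] A ⊗[k] B).range := by
  rw [← (basis A b).linearCombination_repr y, Finsupp.linearCombination_apply]
  refine Subalgebra.sum_mem _ fun i _ => ?_
  dsimp only
  obtain ⟨w, hw⟩ := (Algebra.mem_bot (R := k)).mp (Algebra.IsCentral.out (hy i))
  rw [← hw, basis_repr_symm_apply', Algebra.algebraMap_eq_smul_one, smul_tmul]
  exact ⟨w • b i, rfl⟩

end Algebra.TensorProduct

section IsSimpleRing

open Algebra.TensorProduct

variable {k A B : Type*} [Field k] [Ring A] [Ring B] [Algebra k A] [Algebra k B]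

theorem TwoSidedIdeal.exists_one_tmul_mem [IsSimpleRing A] [Algebra.IsCentral k A]
    (I : TwoSidedIdeal (A ⊗[k] B)) (hI : I ≠ ⊥) : ∃ b : B, b ≠ 0 ∧ (1 : A) ⊗ₜ b ∈ I := by
  set e := Basis.ofVectorSpace k B
  set ψ := (basis A e).repr
  obtain ⟨x, ⟨hxI, hx0⟩, hmin⟩ := (InvImage.wf (fun x => (ψ x).support) wellFounded_lt).has_min
    {x | x ∈ I ∧ x ≠ 0} <| by
      obtain ⟨x, hxI, hx⟩ := SetLike.exists_of_lt (bot_lt_iff_ne_bot.mpr hI)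
      exact ⟨x, hxI, by simpa using hx⟩
  obtain ⟨i₀, hi₀⟩ : (ψ x).support.Nonempty := by simpa using hx0
  -- The `i₀`-th coordinates of the elements of `I` supported in `supp x` form a nonzero ideal.
  let J : TwoSidedIdeal A := .mk' {a | ∃ y ∈ I, (∀ i ∉ (ψ x).support, ψ y i = 0) ∧ ψ y i₀ = a}
    ⟨0, I.zero_mem, by simp, by simp⟩
    (fun ⟨y, hy, hys, hyi⟩ ⟨z, hz, hzs, hzi⟩ =>
      ⟨y + z, I.add_mem hy hz, fun i hi => by simp [hys i hi, hzs i hi], by simp [hyi, hzi]⟩)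
    (fun ⟨y, hy, hys, hyi⟩ => ⟨-y, I.neg_mem hy, fun i hi => by simp [hys i hi], by simp [hyi]⟩)
    (fun {c _} ⟨y, hy, hys, hyi⟩ => ⟨(c ⊗ₜ 1) * y, I.mul_mem_left _ _ hy,
      fun i hi => by simp [ψ, hys i hi], by simp [ψ, hyi]⟩)
    (fun {_ d} ⟨y, hy, hys, hyi⟩ => ⟨y * (d ⊗ₜ 1), I.mul_mem_right _ _ hy,
      fun i hi => by simp [ψ, hys i hi], by simp [ψ, hyi]⟩)
  obtain ⟨y, hyI, hys, hy1⟩ : (1 : A) ∈ J :=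
    IsSimpleRing.one_mem_of_ne_zero_mem J (Finsupp.mem_support_iff.mp hi₀)
      ((TwoSidedIdeal.mem_mk' ..).mpr ⟨x, hxI, fun i hi => Finsupp.notMem_support_iff.mp hi, rfl⟩)
  -- `(c ⊗ 1) y - y (c ⊗ 1) ∈ I` is supported in `supp x \ {i₀}`, so it vanishes by minimality.
  have hcomm (c : A) (i) : c * ψ y i = ψ y i * c := by
    set z := (c ⊗ₜ 1) * y - y * (c ⊗ₜ 1)
    have hz (i) : ψ z i = c * ψ y i - ψ y i * c := by simp [z, ψ]
    suffices z = 0 by simpa [hz, sub_eq_zero] using congr(ψ $this i)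
    by_contra hz0
    refine hmin z ⟨I.sub_mem (I.mul_mem_left _ _ hyI) (I.mul_mem_right _ _ hyI), hz0⟩ ?_
    refine Finset.ssubset_iff_of_subset (fun j hj => ?_) |>.mpr ⟨i₀, hi₀, by simp [hz, hy1]⟩
    by_contra hj'
    simp [hz, hys j hj'] at hj
  obtain ⟨b, rfl⟩ := mem_range_includeRight_of_repr_mem_center e y fun i =>
    Subalgebra.mem_center_iff.mpr fun c => hcomm c i
  refine ⟨b, fun hb => ?_, hyI⟩
  simp [hb] at hy1

instance Algebra.TensorProduct.isSimpleRing [IsSimpleRing A] [Algebra.IsCentral k A]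
    [IsSimpleRing B] : IsSimpleRing (A ⊗[k] B) := by
  refine .of_eq_bot_or_eq_top fun I => or_iff_not_imp_left.mpr fun hI => ?_
  obtain ⟨b, hb, hbI⟩ := I.exists_one_tmul_mem hI
  have h1 : (1 : B) ∈ TwoSidedIdeal.comap (includeRight : B →ₐ[k] A ⊗[k] B) I :=
    IsSimpleRing.one_mem_of_ne_zero_mem _ hb ((TwoSidedIdeal.mem_comap _).mpr hbI)
  rw [TwoSidedIdeal.mem_comap, map_one] at h1
  exact I.eq_top h1

end IsSimpleRing

section FinrankEq

variable {k C D : Type*} [Field k] [Ring C] [Ring D] [Algebra k C] [Algebra k D]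
  [IsSimpleRing C] [Nontrivial D]

theorem AlgHom.finrank_le_of_isSimpleRing [FiniteDimensional k D] (f : C →ₐ[k] D) :
    finrank k C ≤ finrank k D :=
  LinearMap.finrank_le_finrank_of_injective (f := f.toLinearMap) f.toRingHom.injective

noncomputable def AlgHom.algEquivOfFinrankEq [FiniteDimensional k C] [FiniteDimensional k D]
    (f : C →ₐ[k] D) (h : finrank k C = finrank k D) : C ≃ₐ[k] D :=
  .ofBijective f ⟨f.toRingHom.injective,
    (LinearMap.injective_iff_surjective_of_finrank_eq_finrank (f := f.toLinearMap) h).mp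
      f.toRingHom.injective⟩

end FinrankEq

noncomputable def matrixAlgEquivOfTensorMopAlgEquivMatrix {k A B n m : Type*} [CommRing k]
    [Ring A] [Ring B] [Algebra k A] [Algebra k B] [Fintype n] [DecidableEq n] [Fintype m]
    [DecidableEq m] (e₁ : A ⊗[k] Bᵐᵒᵖ ≃ₐ[k] Matrix n n k) (e₂ : B ⊗[k] Bᵐᵒᵖ ≃ₐ[k] Matrix m m k) :
    Matrix n n B ≃ₐ[k] Matrix m m A :=
  (matrixEquivTensor n k B).trans <|
    (Algebra.TensorProduct.congr .refl e₁.symm).trans <|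
    (Algebra.TensorProduct.comm k B _).trans <|
    (Algebra.TensorProduct.assoc k k k A Bᵐᵒᵖ B).trans <|
    (Algebra.TensorProduct.congr .refl ((Algebra.TensorProduct.comm k Bᵐᵒᵖ B).trans e₂)).trans <|
    (matrixEquivTensor m k A).symm

theorem finrank_balancedTensor_mul_finrank (k A B : Type) [Field k] [Ring A] [Ring B]
    [Algebra k A] [Algebra k B] [IsSimpleRing B] [FiniteDimensional k B]
    (M N : Type) [AddCommGroup M] [AddCommGroup N]
    [Module (A ⊗[k] Bᵐᵒᵖ) M] [Module k M] [IsScalarTower k (A ⊗[k] Bᵐᵒᵖ) M]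
    [Module (B ⊗[k] Aᵐᵒᵖ) N] [Module k N] [IsScalarTower k (B ⊗[k] Aᵐᵒᵖ) N]
    [FiniteDimensional k M] [FiniteDimensional k N] :
    finrank k (balancedTensor k A B M N) * finrank k B = finrank k M * finrank k N := by
  let fM : Bᵐᵒᵖ →ₐ[k] A ⊗[k] Bᵐᵒᵖ := Algebra.TensorProduct.includeRight
  let fN : B →ₐ[k] B ⊗[k] Aᵐᵒᵖ := Algebra.TensorProduct.includeLeft
  let : Module Bᵐᵒᵖ M := .compHom M fM.toRingHom
  let : Module B N := .compHom N fN.toRingHom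
  have : IsScalarTower k Bᵐᵒᵖ M :=
    ⟨fun c b m => show fM (c • b) • m = c • fM b • m by rw [map_smul, smul_assoc]⟩
  have : IsScalarTower k B N :=
    ⟨fun c b n => show fN (c • b) • n = c • fN b • n by rw [map_smul, smul_assoc]⟩
  rw [← BalancedTensorProduct.finrank_mul_finrank (k := k) (B := B) M N]
  exact congrArg (· * _) (Submodule.quotEquivOfEq _ _ rfl).finrank_eq

theorem brauer_eq_of_invertible_bimodule_general (k A B : Type) [Field k] [Ring A] [Ring B]
    [Algebra k A] [Algebra k B] [FiniteDimensional k A] [FiniteDimensional k B]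
    [Algebra.IsCentral k A] [IsSimpleRing A] [Algebra.IsCentral k B] [IsSimpleRing B]
    (M N : Type) [AddCommGroup M] [AddCommGroup N]
    [Module (A ⊗[k] Bᵐᵒᵖ) M] [Module k M] [IsScalarTower k (A ⊗[k] Bᵐᵒᵖ) M]
    [Module (B ⊗[k] Aᵐᵒᵖ) N] [Module k N] [IsScalarTower k (B ⊗[k] Aᵐᵒᵖ) N]
    [Module.Finite (A ⊗[k] Bᵐᵒᵖ) M]
    [Module.Finite (B ⊗[k] Aᵐᵒᵖ) N]
    (hMN : IsBimoduleIsoToA k A B M N) :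
    ∃ n m : ℕ, 0 < n ∧ 0 < m ∧
      Nonempty (Matrix (Fin n) (Fin n) A ≃ₐ[k] Matrix (Fin m) (Fin m) B) := by
  obtain ⟨e, -, -⟩ := hMN
  have : Module.Finite k M := .trans (A ⊗[k] Bᵐᵒᵖ) M
  have : Module.Finite k N := .trans (B ⊗[k] Aᵐᵒᵖ) N
  have hdim : finrank k A * finrank k B = finrank k M * finrank k N := by
    rw [← e.finrank_eq, finrank_balancedTensor_mul_finrank]
  obtain ⟨hM, hN⟩ := CanonicallyOrderedAdd.mul_pos.mp (hdim ▸ mul_pos finrank_pos finrank_pos)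
  have : Nontrivial M := nontrivial_of_finrank_pos hM
  have : Nontrivial N := nontrivial_of_finrank_pos hN
  let ρM : A ⊗[k] Bᵐᵒᵖ →ₐ[k] Module.End k M := Algebra.lsmul k k M
  let ρN : B ⊗[k] Aᵐᵒᵖ →ₐ[k] Module.End k N := Algebra.lsmul k k N
  have hleM := ρM.finrank_le_of_isSimpleRing
  have hleN := ρN.finrank_le_of_isSimpleRing
  simp only [finrank_tensorProduct, finrank_linearMap, MulOpposite.finrank] at hleM hleN
  have hrank : finrank k M = finrank k N := by nlinarith
  have hρM : finrank k (A ⊗[k] Bᵐᵒᵖ) = finrank k (Module.End k M) := by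
    simp only [finrank_tensorProduct, finrank_linearMap, MulOpposite.finrank]
    nlinarith
  have hμB : finrank k (B ⊗[k] Bᵐᵒᵖ) = finrank k (Module.End k B) := by
    simp only [finrank_tensorProduct, finrank_linearMap, MulOpposite.finrank]
  exact ⟨finrank k B, finrank k M, finrank_pos, finrank_pos, ⟨.symm <|
    matrixAlgEquivOfTensorMopAlgEquivMatrix
      ((ρM.algEquivOfFinrankEq hρM).trans (algEquivMatrix (finBasis k M)))
      (((AlgHom.mulLeftRight k B).algEquivOfFinrankEq hμB).trans (algEquivMatrix (finBasis k B)))⟩⟩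

/-- Let `A`, `B` be finite-dimensional central simple algebras over a field `k`.  If there exist a
finitely generated projective `A ⊗ Bᵐᵒᵖ`-module `M` and a finitely generated projective
`B ⊗ Aᵐᵒᵖ`-module `N` with `M ⊗_B N ≅ A` as `A`-bimodules and `N ⊗_A M ≅ B` as `B`-bimodules,
then `[A] = [B]` in the Brauer group: `M_n(A) ≅ M_m(B)` for some `n, m ≥ 1`. -/
theorem brauer_eq_of_invertible_bimodule (k A B : Type) [Field k] [Ring A] [Ring B]
    [Algebra k A] [Algebra k B] [FiniteDimensional k A] [FiniteDimensional k B]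
    [Algebra.IsCentral k A] [IsSimpleRing A] [Algebra.IsCentral k B] [IsSimpleRing B]
    (M N : Type) [AddCommGroup M] [AddCommGroup N]
    [Module (A ⊗[k] Bᵐᵒᵖ) M] [Module k M] [IsScalarTower k (A ⊗[k] Bᵐᵒᵖ) M]
    [Module (B ⊗[k] Aᵐᵒᵖ) N] [Module k N] [IsScalarTower k (B ⊗[k] Aᵐᵒᵖ) N]
    [Module.Finite (A ⊗[k] Bᵐᵒᵖ) M] [Module.Projective (A ⊗[k] Bᵐᵒᵖ) M]
    [Module.Finite (B ⊗[k] Aᵐᵒᵖ) N] [Module.Projective (B ⊗[k] Aᵐᵒᵖ) N]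
    (hMN : IsBimoduleIsoToA k A B M N)
    (hNM : IsBimoduleIsoToA k B A N M) :
    ∃ n m : ℕ, 0 < n ∧ 0 < m ∧
      Nonempty (Matrix (Fin n) (Fin n) A ≃ₐ[k] Matrix (Fin m) (Fin m) B) :=
  brauer_eq_of_invertible_bimodule_general k A B M N hMN
end

section
/- Let e_1, ..., e_n be idempotents in M_n(ℤ) arising as images under a ring isomorphism of the standard diagonal idempotent decomposition of the identity (pairwise orthogonal idempotents summing to the identity, each of rank 1). Then each e_i is conjugate to a standard matrix unit E_jj; in particular each e_i has rank 1. -/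
/-!
Over a field of characteristic zero the rank of an idempotent matrix equals its trace. Hence the
ranks of the `e i`, read over `ℚ`, add up to `trace 1 = n`; as each is at least `1`, each is
exactly `1`. A rank-one idempotent is the projection onto a line along a complementary
hyperplane, and a basis adapted to this splitting conjugates it to a matrix unit `E_jj`.
-/

open Matrix Module LinearMap

variable {K ι : Type*} [Field K] [Fintype ι] [DecidableEq ι]

theorem Matrix.rank_eq_zero_iff {m : Type*} [Fintype m] {A : Matrix m ι K} :
    A.rank = 0 ↔ A = 0 := by
  rw [Matrix.rank, Submodule.finrank_eq_zero, range_eq_bot, ← toLin'_apply',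
    LinearEquiv.map_eq_zero_iff]

theorem Matrix.IsIdempotentElem.trace_eq_rank {A : Matrix ι ι K} (hA : IsIdempotentElem A) :
    A.trace = A.rank := by
  have hf : IsIdempotentElem (toLin' A) := hA.map toLinAlgEquiv'
  rw [← trace_toLin'_eq, (LinearMap.IsIdempotentElem.isProj_range _ hf).trace, Matrix.rank]
  rfl

theorem Matrix.rank_eq_one_of_sum_isIdempotentElem_eq_one [CharZero K] (e : ι → Matrix ι ι K)
    (hidem : ∀ i, IsIdempotentElem (e i)) (hsum : ∑ i, e i = 1) (hne : ∀ i, e i ≠ 0) (i : ι) :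
    (e i).rank = 1 := by
  have hpos : ∀ i, 1 ≤ (e i).rank := fun i =>
    Nat.one_le_iff_ne_zero.2 (rank_eq_zero_iff.not.2 (hne i))
  have htotal : ∑ _i : ι, 1 = ∑ i, (e i).rank := by
    apply Nat.cast_injective (R := K)
    simp [← (hidem _).trace_eq_rank, ← trace_sum, hsum]
  exact ((Finset.sum_eq_sum_iff_of_le fun i _ => hpos i).1 htotal i (Finset.mem_univ i)).symm

theorem LinearMap.exists_basis_toMatrix_eq_single_of_isIdempotentElem {V : Type*}
    [AddCommGroup V] [Module K V] [FiniteDimensional K V] {f : V →ₗ[K] V}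
    (hf : IsIdempotentElem f) (hr : finrank K (range f) = 1) (hV : finrank K V = Fintype.card ι) :
    ∃ (b : Basis ι K V) (j : ι), toMatrix b b f = Matrix.single j j 1 := by
  have hproj := LinearMap.IsIdempotentElem.isProj_range _ hf
  have hdim := f.finrank_range_add_finrank_ker
  obtain ⟨j⟩ : Nonempty ι := Fintype.card_pos_iff.1 (by omega)
  have hker : finrank K (ker f) = Fintype.card {k // ¬k = j} := by
    rw [Fintype.card_subtype_compl, Fintype.card_subtype_eq]
    omega
  let bker : Basis {k // ¬k = j} K (ker f) :=
    (finBasisOfFinrankEq K _ hker).reindex (Fintype.equivFin _).symm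
  let b : Basis ι K V :=
    (((basisUnique {k // k = j} hr).prod bker).map
      (Submodule.prodEquivOfIsCompl _ _ hproj.isCompl)).reindex (Equiv.sumCompl (· = j))
  have hbj : f (b j) = b j := hproj.map_id _ (by simp [b])
  have hbk : ∀ k, k ≠ j → f (b k) = 0 := fun k hk => mem_ker.1 (by simp [b, hk])
  refine ⟨b, j, ?_⟩
  ext i k
  rw [toMatrix_apply, Matrix.single_apply]
  by_cases hk : k = j
  · subst hk
    simp [hbj, Finsupp.single_apply, eq_comm]
  · simp [hbk k hk, Ne.symm hk]

theorem Matrix.exists_conj_single_of_isIdempotentElem {A : Matrix ι ι K}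
    (hA : IsIdempotentElem A) (hr : A.rank = 1) :
    ∃ (j : ι) (P : GL ι K),
      A = (P : Matrix ι ι K) * Matrix.single j j 1 * ((P⁻¹ : GL ι K) : Matrix ι ι K) := by
  obtain ⟨b, j, hb⟩ := exists_basis_toMatrix_eq_single_of_isIdempotentElem
    (show IsIdempotentElem (toLin' A) from hA.map toLinAlgEquiv') hr
    (finrank_fintype_fun_eq_card K)
  let c := Pi.basisFun K ι
  let := c.invertibleToMatrix b
  refine ⟨j, unitOfInvertible (c.toMatrix b), ?_⟩
  calc A = toMatrix c c (toLin' A) := by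
        rw [toMatrix_eq_toMatrix', toMatrix'_toLin']
    _ = c.toMatrix b * toMatrix b b (toLin' A) * b.toMatrix c :=
        (basis_toMatrix_mul_linearMap_toMatrix_mul_basis_toMatrix c b c b _).symm
    _ = _ := by rw [hb]; rfl

theorem orthogonal_idempotents_rank_one_general (n : ℕ) (e : Fin n → Matrix (Fin n) (Fin n) ℤ)
    (hidem : ∀ i, IsIdempotentElem (e i))
    (hsum : ∑ i, e i = 1)
    (hne : ∀ i, e i ≠ 0) :
    ∀ i, (∃ (j : Fin n) (P : GL (Fin n) ℚ),
        (e i).map (Int.cast : ℤ → ℚ) =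
          (P : Matrix (Fin n) (Fin n) ℚ) * Matrix.single j j 1 *
            ((P⁻¹ : GL (Fin n) ℚ) : Matrix (Fin n) (Fin n) ℚ)) ∧
      ((e i).map (Int.cast : ℤ → ℚ)).rank = 1 := by
  intro i
  let φ := (Int.castRingHom ℚ).mapMatrix (m := Fin n)
  have hidemℚ : ∀ i, IsIdempotentElem (φ (e i)) := fun i => (hidem i).map φ
  have hsumℚ : ∑ i, φ (e i) = 1 := by rw [← map_sum, hsum, map_one]
  have hneℚ : ∀ i, φ (e i) ≠ 0 := fun i =>
    (map_ne_zero_iff φ (Matrix.map_injective Int.cast_injective)).2 (hne i)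
  have hrank := rank_eq_one_of_sum_isIdempotentElem_eq_one _ hidemℚ hsumℚ hneℚ i
  exact ⟨exists_conj_single_of_isIdempotentElem (hidemℚ i) hrank, hrank⟩

/-- Let `e 1, …, e n` be nonzero pairwise-orthogonal idempotents in `M_n(ℤ)` summing to the
identity.  Then each `e i`, viewed as a rational matrix, is conjugate to a standard matrix unit
`E_jj`; in particular each `e i` has rank `1` over `ℚ`. -/
theorem orthogonal_idempotents_rank_one (n : ℕ) (e : Fin n → Matrix (Fin n) (Fin n) ℤ)
    (hidem : ∀ i, IsIdempotentElem (e i))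
    (horth : ∀ i j, i ≠ j → e i * e j = 0)
    (hsum : ∑ i, e i = 1)
    (hne : ∀ i, e i ≠ 0) :
    ∀ i, (∃ (j : Fin n) (P : GL (Fin n) ℚ),
        (e i).map (Int.cast : ℤ → ℚ) =
          (P : Matrix (Fin n) (Fin n) ℚ) * Matrix.single j j 1 *
            ((P⁻¹ : GL (Fin n) ℚ) : Matrix (Fin n) (Fin n) ℚ)) ∧
      ((e i).map (Int.cast : ℤ → ℚ)).rank = 1 :=
  orthogonal_idempotents_rank_one_general n e hidem hsum hne
end
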